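/- arXiv:2108.06567 — 2 statements merged into one kernel-verified Lean document; each statement's English description precedes it below -/
import Mathlib

section
/- Let E ∈ ℝ, B > 0, D = E² + B², and β ∈ (0, π/2). Define g(H) = (H² + 2sin²β(E·cot β − B)H + D·sin²β)/(H² + 2sin²β(E·cot β + B)H + D·sin²β) for H > 0, assuming the denominator is positive on (0,∞). Then g attains its minimum on (0,∞) at H = sin β·√D, and g(sin β·√D) = (√D + E·cos β − B·sin β)/(√D + E·cos β + B·sin β). -/
open Real

/-!
Write `s = sin β`, `r = √D`, `u = E cos β`, `v = B sin β`. The numerator `N` and denominator `M`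
of `g` are `Q(H) ∓ 2svH` with `Q(H) = H² + 2suH + s²r²`, and after cross-multiplying,
`g(H) ≥ g(sr)` is the identity `N(H)·(r+u+v) − (r+u−v)·M(H) = 2v(H − sr)²`. Positivity of
`r + u + v` comes from the Lagrange identity `(E cos β + B sin β)² + (E sin β − B cos β)² = D`,
whose second square cannot vanish when `E cos β + B sin β < 0` because `B > 0`.
-/

/-- `g` in the variables `s = sin β`, `r = √D`, `u = E cos β`, `v = B sin β`. -/
noncomputable def kappaSq (s r u v H : ℝ) : ℝ :=
  (H ^ 2 + 2 * s * (u - v) * H + s ^ 2 * r ^ 2) / (H ^ 2 + 2 * s * (u + v) * H + s ^ 2 * r ^ 2)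

lemma sq_add_two_mul_mul_add_sq_pos {s r w H : ℝ} (hs : 0 < s) (hH : 0 < H) (hrw : 0 < r + w) :
    0 < H ^ 2 + 2 * s * w * H + s ^ 2 * r ^ 2 := by
  have h : H ^ 2 + 2 * s * w * H + s ^ 2 * r ^ 2 = (H - s * r) ^ 2 + 2 * s * H * (r + w) := by ring
  rw [h]
  positivity

lemma kappaSq_mul_self {s r : ℝ} (u v : ℝ) (hs : s ≠ 0) (hr : r ≠ 0) :
    kappaSq s r u v (s * r) = (r + u - v) / (r + u + v) := by
  have hnum : (s * r) ^ 2 + 2 * s * (u - v) * (s * r) + s ^ 2 * r ^ 2 =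
      2 * s ^ 2 * r * (r + u - v) := by ring
  have hden : (s * r) ^ 2 + 2 * s * (u + v) * (s * r) + s ^ 2 * r ^ 2 =
      2 * s ^ 2 * r * (r + u + v) := by ring
  rw [kappaSq, hnum, hden, mul_div_mul_left _ _ (by positivity)]

lemma div_le_kappaSq {s r u v H : ℝ} (hs : 0 < s) (hv : 0 ≤ v) (hpos : 0 < r + u + v)
    (hH : 0 < H) : (r + u - v) / (r + u + v) ≤ kappaSq s r u v H := by
  have hM : 0 < H ^ 2 + 2 * s * (u + v) * H + s ^ 2 * r ^ 2 :=
    sq_add_two_mul_mul_add_sq_pos hs hH (by linarith)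
  rw [kappaSq, div_le_div_iff₀ hpos hM]
  have key : (H ^ 2 + 2 * s * (u - v) * H + s ^ 2 * r ^ 2) * (r + u + v)
      - (r + u - v) * (H ^ 2 + 2 * s * (u + v) * H + s ^ 2 * r ^ 2) = 2 * v * (H - s * r) ^ 2 := by
    ring
  linarith [mul_nonneg hv (sq_nonneg (H - s * r))]

lemma sqrt_sq_add_sq_add_mul_add_mul_pos {E B c s : ℝ} (hB : 0 < B) (hs : 0 < s)
    (hcs : c ^ 2 + s ^ 2 = 1) : 0 < √(E ^ 2 + B ^ 2) + E * c + B * s := by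
  have hlagrange : (E * c + B * s) ^ 2 + (E * s - B * c) ^ 2 = E ^ 2 + B ^ 2 := by
    linear_combination (E ^ 2 + B ^ 2) * hcs
  rcases le_or_gt 0 (E * c + B * s) with hp | hp
  · have : 0 < √(E ^ 2 + B ^ 2) := sqrt_pos.2 (by positivity)
    linarith
  · have hq : E * s - B * c ≠ 0 := by
      intro hq
      have : s * (E * c + B * s) = c * (E * s - B * c) + B := by linear_combination B * hcs
      rw [hq, mul_zero, zero_add] at this
      linarith [mul_neg_of_pos_of_neg hs hp]
    have : -(E * c + B * s) < √(E ^ 2 + B ^ 2) :=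
      lt_sqrt_of_sq_lt (by nlinarith [sq_pos_of_ne_zero hq])
    linarith

theorem kappa_sq_min_sectorial_general (E B D β : ℝ) (hB : 0 < B) (hD : D = E ^ 2 + B ^ 2)
    (hβ : β ∈ Set.Ioo (0 : ℝ) (π / 2))
    (g : ℝ → ℝ)
    (hg : ∀ H : ℝ, g H =
      (H ^ 2 + 2 * Real.sin β ^ 2 * (E * Real.cot β - B) * H + D * Real.sin β ^ 2) /
        (H ^ 2 + 2 * Real.sin β ^ 2 * (E * Real.cot β + B) * H + D * Real.sin β ^ 2)) :
    (∀ H : ℝ, 0 < H → g (Real.sin β * Real.sqrt D) ≤ g H) ∧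
      g (Real.sin β * Real.sqrt D) =
        (Real.sqrt D + E * Real.cos β - B * Real.sin β) /
          (Real.sqrt D + E * Real.cos β + B * Real.sin β) := by
  have hs : 0 < sin β := sin_pos_of_pos_of_lt_pi hβ.1 (by linarith [hβ.2, pi_pos])
  have hD0 : 0 < D := by rw [hD]; positivity
  have hr : 0 < √D := sqrt_pos.2 hD0
  have hsq : √D ^ 2 = D := sq_sqrt hD0.le
  have hcot : sin β ^ 2 * cot β = sin β * cos β := by
    rw [cot_eq_cos_div_sin]
    field_simp
  have hpos : 0 < √D + E * cos β + B * sin β :=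
    hD ▸ sqrt_sq_add_sq_add_mul_add_mul_pos hB hs (cos_sq_add_sin_sq β)
  have hg' : g = kappaSq (sin β) √D (E * cos β) (B * sin β) := by
    funext H
    rw [hg, kappaSq]
    congr 1 <;> linear_combination (2 * E * H) * hcot - sin β ^ 2 * hsq
  rw [hg', kappaSq_mul_self _ _ hs.ne' hr.ne']
  exact ⟨fun H hH => div_le_kappaSq hs (by positivity) hpos hH, rfl⟩

/-- For `E ∈ ℝ`, `B > 0`, `D = E² + B²`, `β ∈ (0, π/2)`, the function
`g(H) = (H² + 2sin²β(E·cotβ − B)H + D·sin²β)/(H² + 2sin²β(E·cotβ + B)H + D·sin²β)`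
(assuming the denominator is positive on `(0,∞)`) attains its minimum on `(0,∞)`
at `H = sinβ·√D`, with value `(√D + E·cosβ − B·sinβ)/(√D + E·cosβ + B·sinβ)`. -/
theorem kappa_sq_min_sectorial (E B D β : ℝ) (hB : 0 < B) (hD : D = E ^ 2 + B ^ 2)
    (hβ : β ∈ Set.Ioo (0 : ℝ) (π / 2))
    (g : ℝ → ℝ)
    (hg : ∀ H : ℝ, g H =
      (H ^ 2 + 2 * Real.sin β ^ 2 * (E * Real.cot β - B) * H + D * Real.sin β ^ 2) /
        (H ^ 2 + 2 * Real.sin β ^ 2 * (E * Real.cot β + B) * H + D * Real.sin β ^ 2))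
    (hden : ∀ H : ℝ, 0 < H →
      0 < H ^ 2 + 2 * Real.sin β ^ 2 * (E * Real.cot β + B) * H + D * Real.sin β ^ 2) :
    (∀ H : ℝ, 0 < H → g (Real.sin β * Real.sqrt D) ≤ g H) ∧
      g (Real.sin β * Real.sqrt D) =
        (Real.sqrt D + E * Real.cos β - B * Real.sin β) /
          (Real.sqrt D + E * Real.cos β + B * Real.sin β) :=
  kappa_sq_min_sectorial_general E B D β hB hD hβ g hg
end

section
/- Let c ∈ ℝ, d < 0, and 𝒟 > 0 with 𝒟 ≠ −d. Define a(x) = (−(c+x)² − 𝒟² − d² + √(((c+x)² + 𝒟² + d²)² − 4d²𝒟²))/(2d𝒟) for x ∈ ℝ. Then a attains its maximum on ℝ at x = −c, and a(−c) = −d/𝒟 if 𝒟 > −d, while a(−c) = −𝒟/d if 𝒟 < −d. -/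
/-- For `d < 0`, `𝒟 > 0`, `𝒟 ≠ −d`, the function
`a(x) = (−(c+x)² − 𝒟² − d² + √(((c+x)² + 𝒟² + d²)² − 4d²𝒟²))/(2d𝒟)` attains its
maximum on `ℝ` at `x = −c`, with `a(−c) = −d/𝒟` if `𝒟 > −d` and `a(−c) = −𝒟/d`
if `𝒟 < −d`. -/
theorem a_max_at_neg_c (c d 𝒟 : ℝ) (hd : d < 0) (h𝒟 : 0 < 𝒟) (hne : 𝒟 ≠ -d)
    (a : ℝ → ℝ)
    (ha : ∀ x : ℝ, a x =
      (-(c + x) ^ 2 - 𝒟 ^ 2 - d ^ 2 +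
          Real.sqrt (((c + x) ^ 2 + 𝒟 ^ 2 + d ^ 2) ^ 2 - 4 * d ^ 2 * 𝒟 ^ 2)) / (2 * d * 𝒟)) :
    (∀ x : ℝ, a x ≤ a (-c)) ∧
      (-d < 𝒟 → a (-c) = -d / 𝒟) ∧
      (𝒟 < -d → a (-c) = -𝒟 / d) := by
  have hden : 2 * d * 𝒟 < 0 := by nlinarith
  have hsqrt0 : Real.sqrt (((c + -c) ^ 2 + 𝒟 ^ 2 + d ^ 2) ^ 2 - 4 * d ^ 2 * 𝒟 ^ 2)
      = |𝒟 ^ 2 - d ^ 2| := by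
    rw [show ((c + -c) ^ 2 + 𝒟 ^ 2 + d ^ 2) ^ 2 - 4 * d ^ 2 * 𝒟 ^ 2 = (𝒟 ^ 2 - d ^ 2) ^ 2 by ring,
      Real.sqrt_sq_eq_abs]
  have hac : a (-c) = (-(c + -c) ^ 2 - 𝒟 ^ 2 - d ^ 2 + |𝒟 ^ 2 - d ^ 2|) / (2 * d * 𝒟) := by
    rw [ha, hsqrt0]
  refine ⟨?_, ?_, ?_⟩
  · intro x
    have ht : 0 ≤ (c + x) ^ 2 := sq_nonneg _
    have hE : |𝒟 ^ 2 - d ^ 2| ≤ 𝒟 ^ 2 + d ^ 2 := by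
      rw [abs_le]; constructor <;> nlinarith [sq_nonneg d, sq_nonneg 𝒟]
    have hE2 : |𝒟 ^ 2 - d ^ 2| ^ 2 = (𝒟 ^ 2 - d ^ 2) ^ 2 := sq_abs _
    have hkey : (c + x) ^ 2 + |𝒟 ^ 2 - d ^ 2| ≤
        Real.sqrt (((c + x) ^ 2 + 𝒟 ^ 2 + d ^ 2) ^ 2 - 4 * d ^ 2 * 𝒟 ^ 2) := by
      apply Real.le_sqrt_of_sq_le
      nlinarith [abs_nonneg (𝒟 ^ 2 - d ^ 2)]
    rw [ha, hac, div_le_div_right_of_neg hden]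
    linarith
  · intro h
    have : |𝒟 ^ 2 - d ^ 2| = 𝒟 ^ 2 - d ^ 2 := abs_of_nonneg (by nlinarith)
    have hd0 : d ≠ 0 := ne_of_lt hd
    have h𝒟0 : 𝒟 ≠ 0 := ne_of_gt h𝒟
    rw [hac, this]
    field_simp
    ring
  · intro h
    have : |𝒟 ^ 2 - d ^ 2| = -(𝒟 ^ 2 - d ^ 2) := abs_of_nonpos (by nlinarith)
    have hd0 : d ≠ 0 := ne_of_lt hd
    have h𝒟0 : 𝒟 ≠ 0 := ne_of_gt h𝒟
    rw [hac, this]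
    field_simp
    ring
end
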